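/- Let Ω ⊆ ℝ³ be open and I ⊆ ℝ an open interval. Let u : I × Ω → ℝ³ be continuous and twice continuously differentiable in the spatial variable with div u(t,·) = 0 on Ω for every t ∈ I. Let g : I × Ω → ℝ³ be continuously differentiable in the spatial variable with div g(t,·) = 0 on Ω for every t ∈ I. Let Y : I × Ω → ℝ³ be twice continuously differentiable jointly in (t,x) and satisfy ∂_t Y + u·∇Y − Y·∇u = g on I × Ω. Then the scalar field φ := div Y satisfies the transport equation ∂_t φ + u·∇φ = 0 on I × Ω. -/

import Mathlib

/-!
Write `div v = tr Dv`. Since `Y` is `C²`, `∂ₜ div Y = div ∂ₜY = div g - div (DY·u) + div (Du·Y)`.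
By the symmetry of second derivatives, `div (Dw·v) = tr (Dw Dv) + D(div w)·v`, so
`div (DY·u) = tr (DY Du) + u·∇φ` and `div (Du·Y) = tr (Du DY) + Y·∇(div u)`. The two traces
agree because `tr (AB) = tr (BA)`, and `div g = div u = 0`, leaving `∂ₜφ = -u·∇φ`.
-/

noncomputable section

local notation "E3" => EuclideanSpace ℝ (Fin 3)

/-- Divergence of a vector field `v : ℝ³ → ℝ³` at `x`: `div v = ∑ᵢ ∂ᵢvⁱ`. -/
noncomputable def div3 (v : E3 → E3) (x : E3) : ℝ :=
  ∑ i : Fin 3, fderiv ℝ v x (EuclideanSpace.single i 1) i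

open Filter Topology

section PartialDerivatives

variable {E G : Type*} [NormedAddCommGroup E] [NormedSpace ℝ E]
  [NormedAddCommGroup G] [NormedSpace ℝ G]

theorem differentiableAt_fderiv_apply {w : E → G} {v : E → E} {x : E}
    (hw : ContDiffAt ℝ 2 w x) (hv : DifferentiableAt ℝ v x) :
    DifferentiableAt ℝ (fun y => fderiv ℝ w y (v y)) x :=
  ((hw.fderiv_right le_rfl).differentiableAt one_ne_zero).clm_apply hv

variable {F : ℝ × E → G} {t : ℝ} {x : E}

theorem fderiv_partial_snd (hF : DifferentiableAt ℝ F (t, x)) :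
    fderiv ℝ (fun y => F (t, y)) x = (fderiv ℝ F (t, x)).comp (.inr ℝ ℝ E) :=
  (hF.hasFDerivAt.comp x (hasFDerivAt_prodMk_right t x)).fderiv

theorem hasDerivAt_partial_fst (hF : DifferentiableAt ℝ F (t, x)) :
    HasDerivAt (fun s => F (s, x)) (fderiv ℝ F (t, x) (1, 0)) t :=
  hF.hasFDerivAt.comp_hasDerivAt t ((hasDerivAt_id t).prodMk (hasDerivAt_const t x))

theorem hasDerivAt_fderiv_partial_snd (hF : ContDiffAt ℝ 2 F (t, x)) :
    HasDerivAt (fun s => fderiv ℝ (fun y => F (s, y)) x)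
      (fderiv ℝ (fun y => deriv (fun s => F (s, y)) t) x) t := by
  have hdiff : ∀ᶠ p in 𝓝 (t, x), DifferentiableAt ℝ F p :=
    (hF.eventually (by simp)).mono fun p hp => hp.differentiableAt two_ne_zero
  have hF' : DifferentiableAt ℝ (fderiv ℝ F) (t, x) :=
    (hF.fderiv_right le_rfl).differentiableAt one_ne_zero
  have h_time : HasDerivAt (fun s => fderiv ℝ (fun y => F (s, y)) x)
      ((fderiv ℝ (fderiv ℝ F) (t, x) (1, 0)).comp (.inr ℝ ℝ E)) t := by
    refine (((ContinuousLinearMap.compL ℝ E (ℝ × E) G).flip (.inr ℝ ℝ E)).hasFDerivAt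
      |>.comp_hasDerivAt t (hasDerivAt_partial_fst hF')).congr_of_eventuallyEq ?_
    filter_upwards [(Continuous.prodMk_left x).tendsto t |>.eventually hdiff] with s hs
    exact fderiv_partial_snd hs
  have h_space : (fun y => deriv (fun s => F (s, y)) t) =ᶠ[𝓝 x]
      fun y => fderiv ℝ F (t, y) (1, 0) := by
    filter_upwards [(Continuous.prodMk_right t).tendsto x |>.eventually hdiff] with y hy
    exact (hasDerivAt_partial_fst hy).deriv
  -- both derivatives are `D²F (t, x)` evaluated on `(1, 0)` and `(0, ·)`, in opposite orders
  convert h_time using 1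
  rw [h_space.fderiv_eq, fderiv_partial_snd (hF'.clm_apply (differentiableAt_const _))]
  ext1 w
  simp [fderiv_clm_apply hF' (differentiableAt_const _), (hF.isSymmSndFDerivAt (by simp)).eq]

end PartialDerivatives

section Divergence

variable {E : Type*} [NormedAddCommGroup E] [NormedSpace ℝ E] [FiniteDimensional ℝ E]

def traceCLM : (E →L[ℝ] E) →L[ℝ] ℝ :=
  LinearMap.toContinuousLinearMap (LinearMap.trace ℝ E ∘ₗ ContinuousLinearMap.coeLM ℝ)

@[simp]
theorem traceCLM_apply (f : E →L[ℝ] E) : traceCLM f = LinearMap.trace ℝ E f := rfl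

theorem traceCLM_comp_comm (f g : E →L[ℝ] E) : traceCLM (f.comp g) = traceCLM (g.comp f) :=
  LinearMap.trace_mul_comm ℝ (f : E →ₗ[ℝ] E) g

def divergence (v : E → E) (x : E) : ℝ :=
  traceCLM (fderiv ℝ v x)

theorem div3_eq_divergence : div3 = divergence := by
  ext v x
  simp [div3, divergence,
    LinearMap.trace_eq_matrix_trace ℝ (EuclideanSpace.basisFun (Fin 3) ℝ).toBasis,
    Matrix.trace, LinearMap.toMatrix_apply]

variable {v w : E → E} {x : E}

theorem Filter.EventuallyEq.divergence_eq (h : v =ᶠ[𝓝 x] w) :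
    divergence v x = divergence w x := by
  rw [divergence, divergence, h.fderiv_eq]

theorem divergence_add (hv : DifferentiableAt ℝ v x) (hw : DifferentiableAt ℝ w x) :
    divergence (fun y => v y + w y) x = divergence v x + divergence w x := by
  rw [divergence, fderiv_fun_add hv hw, map_add, divergence, divergence]

theorem divergence_sub (hv : DifferentiableAt ℝ v x) (hw : DifferentiableAt ℝ w x) :
    divergence (fun y => v y - w y) x = divergence v x - divergence w x := by
  rw [divergence, fderiv_fun_sub hv hw, map_sub, divergence, divergence]

theorem hasFDerivAt_divergence (h : DifferentiableAt ℝ (fderiv ℝ v) x) :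
    HasFDerivAt (divergence v) (traceCLM.comp (fderiv ℝ (fderiv ℝ v) x)) x :=
  (traceCLM (E := E)).hasFDerivAt.comp x h.hasFDerivAt

theorem divergence_fderiv_apply (hw : ContDiffAt ℝ 2 w x) (hv : DifferentiableAt ℝ v x) :
    divergence (fun y => fderiv ℝ w y (v y)) x
      = traceCLM ((fderiv ℝ w x).comp (fderiv ℝ v x)) + fderiv ℝ (divergence w) x (v x) := by
  have hw' : DifferentiableAt ℝ (fderiv ℝ w) x :=
    (hw.fderiv_right le_rfl).differentiableAt one_ne_zero
  have h_symm : (fderiv ℝ (fderiv ℝ w) x).flip (v x) = fderiv ℝ (fderiv ℝ w) x (v x) := by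
    ext1 z
    exact (hw.isSymmSndFDerivAt (by simp)).eq z (v x)
  rw [divergence, fderiv_clm_apply hw' hv, map_add, h_symm, (hasFDerivAt_divergence hw').fderiv,
    ContinuousLinearMap.comp_apply]

theorem hasDerivAt_divergence_partial_snd {F : ℝ × E → E} {t : ℝ}
    (hF : ContDiffAt ℝ 2 F (t, x)) :
    HasDerivAt (fun s => divergence (fun y => F (s, y)) x)
      (divergence (fun y => deriv (fun s => F (s, y)) t) x) t :=
  (traceCLM (E := E)).hasFDerivAt.comp_hasDerivAt t (hasDerivAt_fderiv_partial_snd hF)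

end Divergence

theorem div_of_solution_is_transported_general
    (Ω : Set E3) (hΩ : IsOpen Ω)
    (I : Set ℝ) (hI : IsOpen I)
    (u g Y : ℝ × E3 → E3)
    (hu_sp : ∀ t ∈ I, ContDiffOn ℝ 2 (fun x => u (t, x)) Ω)
    (hu_div : ∀ t ∈ I, ∀ x ∈ Ω, div3 (fun y => u (t, y)) x = 0)
    (hg_sp : ∀ t ∈ I, ContDiffOn ℝ 1 (fun x => g (t, x)) Ω)
    (hg_div : ∀ t ∈ I, ∀ x ∈ Ω, div3 (fun y => g (t, y)) x = 0)
    (hY : ContDiffOn ℝ 2 Y (I ×ˢ Ω))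
    (hPDE : ∀ t ∈ I, ∀ x ∈ Ω,
      deriv (fun s => Y (s, x)) t
        + fderiv ℝ (fun y => Y (t, y)) x (u (t, x))
        - fderiv ℝ (fun y => u (t, y)) x (Y (t, x)) = g (t, x)) :
    ∀ t ∈ I, ∀ x ∈ Ω,
      deriv (fun s => div3 (fun y => Y (s, y)) x) t
        + fderiv ℝ (fun y => div3 (fun z => Y (t, z)) y) x (u (t, x)) = 0 := by
  intro t ht x hx
  simp only [div3_eq_divergence] at hu_div hg_div ⊢
  have hY_at : ContDiffAt ℝ 2 Y (t, x) := hY.contDiffAt ((hI.prod hΩ).mem_nhds ⟨ht, hx⟩)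
  have hYt : ContDiffAt ℝ 2 (fun z => Y (t, z)) x :=
    hY_at.comp x (contDiff_prodMk_right t).contDiffAt
  have hut : ContDiffAt ℝ 2 (fun z => u (t, z)) x := (hu_sp t ht).contDiffAt (hΩ.mem_nhds hx)
  have hgt : DifferentiableAt ℝ (fun z => g (t, z)) x :=
    ((hg_sp t ht).contDiffAt (hΩ.mem_nhds hx)).differentiableAt one_ne_zero
  have h_dtY : (fun y => deriv (fun s => Y (s, y)) t) =ᶠ[𝓝 x] fun y =>
      g (t, y) - fderiv ℝ (fun z => Y (t, z)) y (u (t, y))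
        + fderiv ℝ (fun z => u (t, z)) y (Y (t, y)) := by
    filter_upwards [hΩ.mem_nhds hx] with y hy
    rw [← hPDE t ht y hy]
    abel
  have h_div_u : fderiv ℝ (divergence fun z => u (t, z)) x = 0 := by
    have : (divergence fun z => u (t, z)) =ᶠ[𝓝 x] fun _ => 0 := by
      filter_upwards [hΩ.mem_nhds hx] with y hy using hu_div t ht y hy
    rw [this.fderiv_eq, fderiv_const_apply]
  have hYu := differentiableAt_fderiv_apply hYt (hut.differentiableAt two_ne_zero)
  have huY := differentiableAt_fderiv_apply hut (hYt.differentiableAt two_ne_zero)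
  rw [(hasDerivAt_divergence_partial_snd hY_at).deriv, h_dtY.divergence_eq,
    divergence_add (hgt.fun_sub hYu) huY, divergence_sub hgt hYu,
    divergence_fderiv_apply hYt (hut.differentiableAt two_ne_zero),
    divergence_fderiv_apply hut (hYt.differentiableAt two_ne_zero),
    hg_div t ht x hx, h_div_u, zero_apply, traceCLM_comp_comm]
  ring

/-- If `u` is divergence-free and spatially `C²`, `g` is divergence-free and spatially
`C¹`, and `Y` is `C²` on `I × Ω` and satisfies `∂_t Y + u·∇Y − Y·∇u = g`, then
`φ := div Y` satisfies the transport equation `∂_t φ + u·∇φ = 0` on `I × Ω`. -/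
theorem div_of_solution_is_transported
    (Ω : Set E3) (hΩ : IsOpen Ω)
    (I : Set ℝ) (hI : IsOpen I) (hI' : I.OrdConnected)
    (u g Y : ℝ × E3 → E3)
    (hu_cont : ContinuousOn u (I ×ˢ Ω))
    (hu_sp : ∀ t ∈ I, ContDiffOn ℝ 2 (fun x => u (t, x)) Ω)
    (hu_div : ∀ t ∈ I, ∀ x ∈ Ω, div3 (fun y => u (t, y)) x = 0)
    (hg_sp : ∀ t ∈ I, ContDiffOn ℝ 1 (fun x => g (t, x)) Ω)
    (hg_div : ∀ t ∈ I, ∀ x ∈ Ω, div3 (fun y => g (t, y)) x = 0)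
    (hY : ContDiffOn ℝ 2 Y (I ×ˢ Ω))
    (hPDE : ∀ t ∈ I, ∀ x ∈ Ω,
      deriv (fun s => Y (s, x)) t
        + fderiv ℝ (fun y => Y (t, y)) x (u (t, x))
        - fderiv ℝ (fun y => u (t, y)) x (Y (t, x)) = g (t, x)) :
    ∀ t ∈ I, ∀ x ∈ Ω,
      deriv (fun s => div3 (fun y => Y (s, y)) x) t
        + fderiv ℝ (fun y => div3 (fun z => Y (t, z)) y) x (u (t, x)) = 0 :=
  div_of_solution_is_transported_general Ω hΩ I hI u g Y hu_sp hu_div hg_sp hg_div hY hPDE
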